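/- arXiv:1903.09877 — 2 statements merged into one kernel-verified Lean document; each statement's English description precedes it below -/
import Mathlib

section
/- Let b ≥ 2, s ≥ 1, n ≥ 2, and let P_n = (V_1,…,V_n) be points in [0,1)^s such that for each j the j-th coordinates V_{1,j},…,V_{n,j} are pairwise distinct, with associated function ψ. Then for every k ∈ ℕ^s, the Lebesgue integral of ψ over (∏_{j=1}^s [0, b^{−k_j})) × (∏_{j=1}^s [0, b^{−k_j})) equals C_b(k;P_n) / b^{2|k|}. -/
open MeasureTheory
open scoped Classical

noncomputable def gammaB (b : ℕ) (x y : ℝ) : ℕ∞ :=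
  if x = y then ⊤
  else (↑(sInf {i : ℕ | ⌊(b : ℝ) ^ i * x⌋ = ⌊(b : ℝ) ^ i * y⌋ ∧
      ⌊(b : ℝ) ^ (i + 1) * x⌋ ≠ ⌊(b : ℝ) ^ (i + 1) * y⌋}) : ℕ∞)

noncomputable def mB {n s : ℕ} (b : ℕ) (P : Fin n → Fin s → ℝ) (k : Fin s → ℕ) (l : Fin n) : ℕ :=
  (Finset.univ.filter fun j : Fin n =>
    j ≠ l ∧ ∀ r : Fin s, (k r : ℕ∞) ≤ gammaB b (P l r) (P j r)).card

noncomputable def nB {n s : ℕ} (b : ℕ) (P : Fin n → Fin s → ℝ) (i : Fin s → ℕ) (l : Fin n) : ℕ :=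
  (Finset.univ.filter fun j : Fin n =>
    j ≠ l ∧ ∀ r : Fin s, gammaB b (P l r) (P j r) = (i r : ℕ∞)).card

noncomputable def MB {n s : ℕ} (b : ℕ) (P : Fin n → Fin s → ℝ) (k : Fin s → ℕ) : ℕ :=
  ∑ l : Fin n, mB b P k l

noncomputable def NB {n s : ℕ} (b : ℕ) (P : Fin n → Fin s → ℝ) (i : Fin s → ℕ) : ℕ :=
  ∑ l : Fin n, nB b P i l

noncomputable def CB {n s : ℕ} (b : ℕ) (P : Fin n → Fin s → ℝ) (k : Fin s → ℕ) : ℝ :=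
  (b : ℝ) ^ (∑ j, k j) * (MB b P k : ℝ) / ((n : ℝ) * ((n : ℝ) - 1))

def DsetS (b s : ℕ) (i : Fin s → ℕ) : Set ((Fin s → ℝ) × (Fin s → ℝ)) :=
  {p | (∀ j, p.1 j ∈ Set.Ico (0 : ℝ) 1) ∧ (∀ j, p.2 j ∈ Set.Ico (0 : ℝ) 1) ∧
    ∀ j, gammaB b (p.1 j) (p.2 j) = (i j : ℕ∞)}

def Rset (s : ℕ) (x y : Fin s → ℝ) : Set ((Fin s → ℝ) × (Fin s → ℝ)) :=
  (Set.univ.pi fun j => Set.Ico 0 (x j)) ×ˢ (Set.univ.pi fun j => Set.Ico 0 (y j))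

noncomputable def ViS (b s : ℕ) (i : Fin s → ℕ) (x y : Fin s → ℝ) : ℝ :=
  (volume (Rset s x y ∩ DsetS b s i)).toReal

noncomputable def psi {n s : ℕ} (b : ℕ) (P : Fin n → Fin s → ℝ) (x y : Fin s → ℝ) : ℝ :=
  if ∀ j, gammaB b (x j) (y j) ≠ ⊤ then
    (NB b P (fun j => (gammaB b (x j) (y j)).toNat) : ℝ) *
      (b : ℝ) ^ (s + ∑ j, (gammaB b (x j) (y j)).toNat) /
      (((b : ℝ) - 1) ^ s * ((n : ℝ) * ((n : ℝ) - 1)))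
  else 0

/-! On the box `[0, b^{-k})²`, the pairs with `γ_b(x, y) = i` are those lying in a common `b`-adic
interval of length `b^{-i}` but not in a common one of length `b^{-(i+1)}`. Counting diagonal
squares, the pairs of the first kind have area `b^{-(i+k)}` when `i ≥ k`, so the pairs with gap `i`
have area `(b - 1) b^{-(i+k+1)}` for `i ≥ k` and `0` for `i < k`.

As the coordinates of the points are distinct, `ψ` is a sum over ordered pairs `l ≠ j` of
`b^{s+|i|} / ((b-1)^s n(n-1))` times the indicator of `{γ_b(x_r, y_r) = i_r for all r}`, where
`i = γ_b(V_l, V_j)`. That set meets the box `∏ [0, b^{-k_r})²` in a product of the planar sets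
above, so each pair contributes `b^{-|k|} / (n(n-1))` if `i ≥ k` and nothing otherwise, and the
pairs that contribute are exactly those counted by `M_b(k; P_n)`. -/

open Set

def SameCell (b m : ℕ) (x y : ℝ) : Prop := ⌊(b : ℝ) ^ m * x⌋ = ⌊(b : ℝ) ^ m * y⌋

namespace SameCell

variable {b : ℕ} {x y : ℝ}

lemma of_le (hb : 0 < b) {m m' : ℕ} (hmm' : m ≤ m') (h : SameCell b m' x y) :
    SameCell b m x y := by
  have key (z : ℝ) : ⌊(b : ℝ) ^ m * z⌋ = ⌊(b : ℝ) ^ m' * z⌋ / (b ^ (m' - m) : ℕ) := by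
    rw [← Int.floor_div_natCast, Nat.cast_pow]
    congr 1
    rw [eq_div_iff (by positivity), mul_right_comm, ← pow_add, Nat.add_sub_cancel' hmm']
  rw [SameCell, key, key, h]

lemma exists_not_of_ne (hb : 1 < b) (hxy : x ≠ y) : ∃ m, ¬ SameCell b m x y := by
  have hpos : 0 < |x - y| := abs_pos.2 (sub_ne_zero.2 hxy)
  obtain ⟨m, hm⟩ := pow_unbounded_of_one_lt |x - y|⁻¹ (by exact_mod_cast hb : (1 : ℝ) < b)
  refine ⟨m, fun h => ?_⟩
  have h1 := Int.abs_sub_lt_one_of_floor_eq_floor h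
  rw [← mul_sub, abs_mul, abs_of_pos (by positivity)] at h1
  rw [inv_lt_iff_one_lt_mul₀ hpos] at hm
  linarith [mul_comm |x - y| ((b : ℝ) ^ m)]

end SameCell

lemma gammaB_eq_top_iff {b : ℕ} {x y : ℝ} : gammaB b x y = ⊤ ↔ x = y := by
  unfold gammaB
  split_ifs with h <;> simp [h]

lemma gammaB_eq_coe_iff {b : ℕ} {x y : ℝ} (hb : 1 < b) (h0 : SameCell b 0 x y) (i : ℕ) :
    gammaB b x y = i ↔ SameCell b i x y ∧ ¬ SameCell b (i + 1) x y := by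
  rcases eq_or_ne x y with rfl | hxy
  · simp [gammaB, SameCell]
  have hex := SameCell.exists_not_of_ne hb hxy
  have hm0 : Nat.find hex ≠ 0 := fun h => Nat.find_spec hex (h ▸ h0)
  have hS : {i : ℕ | SameCell b i x y ∧ ¬ SameCell b (i + 1) x y} = {Nat.find hex - 1} := by
    ext j
    simp only [mem_ofPred_eq, mem_singleton_iff]
    constructor
    · rintro ⟨hj, hj1⟩
      have : Nat.find hex ≤ j + 1 := Nat.find_min' hex hj1
      have : j < Nat.find hex := by
        by_contra! hle
        exact Nat.find_spec hex (hj.of_le (by omega) hle)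
      omega
    · rintro rfl
      refine ⟨not_not.1 (Nat.find_min hex (by omega : Nat.find hex - 1 < Nat.find hex)), ?_⟩
      rw [Nat.sub_add_cancel (by omega)]
      exact Nat.find_spec hex
  rw [gammaB, if_neg hxy]
  change ((sInf {i : ℕ | SameCell b i x y ∧ ¬ SameCell b (i + 1) x y} : ℕ) : ℕ∞) = i ↔ _
  rw [hS, csInf_singleton, Nat.cast_inj, eq_comm, ← mem_singleton_iff, ← hS, mem_ofPred_eq]

section Cells

variable {b : ℕ}

lemma floor_pow_mul_eq_zero (hb : 0 < b) {m k : ℕ} (hmk : m ≤ k) {x : ℝ}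
    (hx : x ∈ Ico 0 ((b : ℝ) ^ k)⁻¹) : ⌊(b : ℝ) ^ m * x⌋ = 0 := by
  have hb1 : (1 : ℝ) ≤ b := by exact_mod_cast hb
  rw [Int.floor_eq_zero_iff]
  refine ⟨mul_nonneg (by positivity) hx.1, ?_⟩
  calc (b : ℝ) ^ m * x ≤ (b : ℝ) ^ k * x :=
        mul_le_mul_of_nonneg_right (pow_le_pow_right₀ hb1 hmk) hx.1
    _ < (b : ℝ) ^ k * ((b : ℝ) ^ k)⁻¹ := mul_lt_mul_of_pos_left hx.2 (by positivity)
    _ = 1 := mul_inv_cancel₀ (by positivity)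

lemma mem_Ico_inv_pow_iff (hb : 0 < b) {m k : ℕ} (hkm : k ≤ m) (x : ℝ) :
    x ∈ Ico 0 ((b : ℝ) ^ k)⁻¹ ↔ ⌊(b : ℝ) ^ m * x⌋ ∈ Finset.Ico 0 ((b : ℤ) ^ (m - k)) := by
  have hbm : (0 : ℝ) < (b : ℝ) ^ m := by positivity
  have hpow : (b : ℝ) ^ (m - k) = (b : ℝ) ^ m * ((b : ℝ) ^ k)⁻¹ := by
    rw [pow_sub₀ _ (by positivity) hkm]
  rw [Finset.mem_Ico, Int.floor_nonneg, Int.floor_lt, mem_Ico, Int.cast_pow, Int.cast_natCast,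
    hpow, mul_lt_mul_iff_right₀ hbm, mul_nonneg_iff_of_pos_left hbm]

lemma preimage_floor_pow_mul_singleton (hb : 0 < b) (m : ℕ) (c : ℤ) :
    (fun z : ℝ => ⌊(b : ℝ) ^ m * z⌋) ⁻¹' {c} = Ico (c / (b : ℝ) ^ m) ((c + 1) / (b : ℝ) ^ m) := by
  have hbm : (0 : ℝ) < (b : ℝ) ^ m := by positivity
  ext z
  rw [mem_preimage, mem_singleton_iff, Int.floor_eq_iff, mem_Ico, div_le_iff₀ hbm,
    lt_div_iff₀ hbm, mul_comm z]

def cellPairs (b m k : ℕ) : Set (ℝ × ℝ) :=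
  (Ico 0 ((b : ℝ) ^ k)⁻¹ ×ˢ Ico 0 ((b : ℝ) ^ k)⁻¹) ∩ {q | SameCell b m q.1 q.2}

lemma measurableSet_cellPairs (b m k : ℕ) : MeasurableSet (cellPairs b m k) :=
  (measurableSet_Ico.prod measurableSet_Ico).inter
    (measurableSet_eq_fun (by fun_prop) (by fun_prop))

lemma volume_Ico_prod_Ico_ne_top (a a' c c' : ℝ) : volume (Ico a c ×ˢ Ico a' c') ≠ ⊤ := by
  rw [Measure.volume_eq_prod, Measure.prod_prod, Real.volume_Ico, Real.volume_Ico]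
  exact ENNReal.mul_ne_top ENNReal.ofReal_ne_top ENNReal.ofReal_ne_top

lemma volume_cellPairs_ne_top (b m k : ℕ) : volume (cellPairs b m k) ≠ ⊤ :=
  measure_ne_top_of_subset inter_subset_left (volume_Ico_prod_Ico_ne_top _ _ _ _)

lemma cellPairs_anti (hb : 0 < b) {m m' : ℕ} (hmm' : m ≤ m') (k : ℕ) :
    cellPairs b m' k ⊆ cellPairs b m k :=
  fun _ ⟨hq, hsame⟩ => ⟨hq, SameCell.of_le hb hmm' hsame⟩

lemma cellPairs_of_le (hb : 0 < b) {m k : ℕ} (hmk : m ≤ k) :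
    cellPairs b m k = Ico 0 ((b : ℝ) ^ k)⁻¹ ×ˢ Ico 0 ((b : ℝ) ^ k)⁻¹ :=
  inter_eq_left.2 fun _ ⟨hx, hy⟩ => by
    simp only [mem_ofPred_eq, SameCell, floor_pow_mul_eq_zero hb hmk hx,
      floor_pow_mul_eq_zero hb hmk hy]

lemma cellPairs_eq_biUnion (hb : 0 < b) {m k : ℕ} (hkm : k ≤ m) :
    cellPairs b m k = ⋃ c ∈ Finset.Ico 0 ((b : ℤ) ^ (m - k)),
      ((fun z : ℝ => ⌊(b : ℝ) ^ m * z⌋) ⁻¹' {c}) ×ˢ ((fun z : ℝ => ⌊(b : ℝ) ^ m * z⌋) ⁻¹' {c}) := by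
  ext ⟨x, y⟩
  simp only [cellPairs, SameCell, mem_inter_iff, mem_prod, mem_Ico_inv_pow_iff hb hkm,
    mem_ofPred_eq, mem_iUnion, mem_preimage, mem_singleton_iff, exists_prop]
  constructor
  · rintro ⟨⟨hx, -⟩, hxy⟩
    exact ⟨_, hx, rfl, hxy.symm⟩
  · rintro ⟨c, hc, rfl, hyx⟩
    exact ⟨⟨hc, hyx ▸ hc⟩, hyx.symm⟩

lemma volume_real_cellPairs (hb : 0 < b) {m k : ℕ} (hkm : k ≤ m) :
    volume.real (cellPairs b m k) = ((b : ℝ) ^ (m + k))⁻¹ := by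
  have hbm : (0 : ℝ) < (b : ℝ) ^ m := by positivity
  have hmeas (c : ℤ) : MeasurableSet ((fun z : ℝ => ⌊(b : ℝ) ^ m * z⌋) ⁻¹' {c}) :=
    measurableSet_singleton c |>.preimage (by fun_prop)
  have hsq (c : ℤ) : volume.real (((fun z : ℝ => ⌊(b : ℝ) ^ m * z⌋) ⁻¹' {c}) ×ˢ
      ((fun z : ℝ => ⌊(b : ℝ) ^ m * z⌋) ⁻¹' {c})) = ((b : ℝ) ^ m)⁻¹ ^ 2 := by
    rw [preimage_floor_pow_mul_singleton hb, Measure.volume_eq_prod, measureReal_prod_prod,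
      Real.volume_real_Ico_of_le (by gcongr; linarith), ← sub_div, add_sub_cancel_left, sq,
      one_div]
  have hdisj : (↑(Finset.Ico 0 ((b : ℤ) ^ (m - k))) : Set ℤ).PairwiseDisjoint fun c =>
      ((fun z : ℝ => ⌊(b : ℝ) ^ m * z⌋) ⁻¹' {c}) ×ˢ ((fun z : ℝ => ⌊(b : ℝ) ^ m * z⌋) ⁻¹' {c}) :=
    fun c _ c' _ hcc' => disjoint_prod.2 <| .inl <| (disjoint_singleton.2 hcc').preimage _
  rw [cellPairs_eq_biUnion hb hkm, measureReal_biUnion_finset hdisj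
      (fun c _ => (hmeas c).prod (hmeas c))
      (fun c _ => preimage_floor_pow_mul_singleton hb m c ▸ volume_Ico_prod_Ico_ne_top _ _ _ _),
    Finset.sum_congr rfl fun c _ => hsq c, Finset.sum_const, Int.card_Ico, sub_zero, nsmul_eq_mul,
    ← Nat.cast_pow, Int.toNat_natCast, Nat.cast_pow, pow_sub₀ _ (by positivity) hkm, pow_add]
  field_simp

end Cells

section Gaps

variable {b : ℕ}

def gapPairs (b i k : ℕ) : Set (ℝ × ℝ) :=
  (Ico 0 ((b : ℝ) ^ k)⁻¹ ×ˢ Ico 0 ((b : ℝ) ^ k)⁻¹) ∩ {q | gammaB b q.1 q.2 = i}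

lemma gapPairs_eq_diff (hb : 1 < b) (i k : ℕ) :
    gapPairs b i k = cellPairs b i k \ cellPairs b (i + 1) k := by
  ext ⟨x, y⟩
  simp only [gapPairs, cellPairs, mem_inter_iff, mem_sdiff, mem_prod, mem_ofPred_eq]
  by_cases hq : x ∈ Ico 0 ((b : ℝ) ^ k)⁻¹ ∧ y ∈ Ico 0 ((b : ℝ) ^ k)⁻¹
  · have h0 : SameCell b 0 x y :=
      (floor_pow_mul_eq_zero (by omega) k.zero_le hq.1).trans
        (floor_pow_mul_eq_zero (by omega) k.zero_le hq.2).symm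
    simp [hq, gammaB_eq_coe_iff hb h0]
  · exact iff_of_false (fun h => hq h.1) (fun h => hq h.1.1)

lemma measurableSet_gapPairs (hb : 1 < b) (i k : ℕ) : MeasurableSet (gapPairs b i k) :=
  gapPairs_eq_diff hb i k ▸ (measurableSet_cellPairs b i k).diff (measurableSet_cellPairs b _ k)

lemma pow_succ_mul_volume_real_gapPairs (hb : 1 < b) (i k : ℕ) :
    (b : ℝ) ^ (i + 1) * volume.real (gapPairs b i k) =
      if k ≤ i then ((b : ℝ) - 1) / (b : ℝ) ^ k else 0 := by
  have hb0 : 0 < b := by omega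
  rw [gapPairs_eq_diff hb]
  split_ifs with hki
  · rw [measureReal_sdiff (cellPairs_anti hb0 (by omega : i ≤ i + 1) k)
      (measurableSet_cellPairs _ _ _) (volume_cellPairs_ne_top _ _ _),
      volume_real_cellPairs hb0 hki, volume_real_cellPairs hb0 (by omega), pow_succ, pow_add, pow_add]
    field_simp
    ring
  · rw [cellPairs_of_le hb0 (by omega : i ≤ k), cellPairs_of_le hb0 (by omega : i + 1 ≤ k),
      sdiff_self, measureReal_empty, mul_zero]

end Gaps

section Boxes

variable {b s : ℕ}

lemma mem_DsetS_iff_of_mem_Rset (hb : 0 < b) {k : Fin s → ℕ} (i : Fin s → ℕ)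
    {p : (Fin s → ℝ) × (Fin s → ℝ)}
    (hp : p ∈ Rset s (fun j => ((b : ℝ) ^ k j)⁻¹) (fun j => ((b : ℝ) ^ k j)⁻¹)) :
    p ∈ DsetS b s i ↔ ∀ r, gammaB b (p.1 r) (p.2 r) = i r := by
  have hle (r : Fin s) : ((b : ℝ) ^ k r)⁻¹ ≤ 1 :=
    inv_le_one_of_one_le₀ (one_le_pow₀ (by exact_mod_cast hb))
  obtain ⟨hx, hy⟩ := hp
  exact ⟨fun h => h.2.2, fun h => ⟨fun r => ⟨(hx r trivial).1, (hx r trivial).2.trans_le (hle r)⟩,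
    fun r => ⟨(hy r trivial).1, (hy r trivial).2.trans_le (hle r)⟩, h⟩⟩

lemma Rset_inter_DsetS_eq_preimage (hb : 0 < b) (k i : Fin s → ℕ) :
    Rset s (fun j => ((b : ℝ) ^ k j)⁻¹) (fun j => ((b : ℝ) ^ k j)⁻¹) ∩ DsetS b s i =
      (MeasurableEquiv.arrowProdEquivProdArrow ℝ ℝ (Fin s)).symm ⁻¹'
        univ.pi fun r => gapPairs b (i r) (k r) := by
  ext p
  rw [mem_inter_iff, and_congr_right fun hp => mem_DsetS_iff_of_mem_Rset hb i hp]
  simp [Rset, gapPairs, MeasurableEquiv.arrowProdEquivProdArrow,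
    Equiv.arrowProdEquivProdArrow, forall_and, and_assoc]

lemma ViS_eq_prod (hb : 0 < b) (k i : Fin s → ℕ) :
    ViS b s i (fun j => ((b : ℝ) ^ k j)⁻¹) (fun j => ((b : ℝ) ^ k j)⁻¹) =
      ∏ r, volume.real (gapPairs b (i r) (k r)) := by
  rw [ViS, Rset_inter_DsetS_eq_preimage hb, (volume_measurePreserving_arrowProdEquivProdArrow
    ℝ ℝ (Fin s)).symm.measure_preimage_equiv, volume_pi_pi, ENNReal.toReal_prod]
  rfl

lemma measurableSet_Rset_inter_DsetS (hb : 1 < b) (k i : Fin s → ℕ) :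
    MeasurableSet
      (Rset s (fun j => ((b : ℝ) ^ k j)⁻¹) (fun j => ((b : ℝ) ^ k j)⁻¹) ∩ DsetS b s i) := by
  rw [Rset_inter_DsetS_eq_preimage (by omega)]
  exact (MeasurableSet.univ_pi fun r => measurableSet_gapPairs hb _ _).preimage
    (MeasurableEquiv.measurable _)

lemma pow_mul_ViS (hb : 1 < b) (k i : Fin s → ℕ) :
    (b : ℝ) ^ (s + ∑ r, i r) *
        ViS b s i (fun j => ((b : ℝ) ^ k j)⁻¹) (fun j => ((b : ℝ) ^ k j)⁻¹) =
      if k ≤ i then ((b : ℝ) - 1) ^ s / (b : ℝ) ^ (∑ r, k r) else 0 := by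
  have hpow : (b : ℝ) ^ (s + ∑ r, i r) = ∏ r, (b : ℝ) ^ (i r + 1) := by
    rw [Finset.prod_pow_eq_pow_sum, Finset.sum_add_distrib, Finset.sum_const, Finset.card_univ,
      Fintype.card_fin, smul_eq_mul, mul_one, add_comm]
  rw [hpow, ViS_eq_prod (by omega), ← Finset.prod_mul_distrib]
  simp_rw [pow_succ_mul_volume_real_gapPairs hb]
  rw [Fintype.prod_ite_zero, Finset.prod_div_distrib, Finset.prod_const, Finset.prod_pow_eq_pow_sum,
    Finset.card_univ, Fintype.card_fin]
  -- `k ≤ i` and `∀ r, k r ≤ i r` carry different `Decidable` instances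
  congr 1

end Boxes

lemma volume_Rset_ne_top {s : ℕ} (x y : Fin s → ℝ) : volume (Rset s x y) ≠ ⊤ := by
  rw [Rset, Measure.volume_eq_prod, Measure.prod_prod, volume_pi_pi, volume_pi_pi]
  exact ENNReal.mul_ne_top (ENNReal.prod_ne_top fun _ _ => measure_Ico_lt_top.ne)
    (ENNReal.prod_ne_top fun _ _ => measure_Ico_lt_top.ne)

lemma measurableSet_Rset {s : ℕ} (x y : Fin s → ℝ) : MeasurableSet (Rset s x y) :=
  (MeasurableSet.univ_pi fun _ => measurableSet_Ico).prod
    (MeasurableSet.univ_pi fun _ => measurableSet_Ico)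

section Integral

variable {b s : ℕ}

lemma eqOn_ite_forall_gammaB_eq (hb : 0 < b) (k i : Fin s → ℕ) (c : ℝ) :
    EqOn (fun p : (Fin s → ℝ) × (Fin s → ℝ) =>
        if ∀ r, gammaB b (p.1 r) (p.2 r) = i r then c else 0)
      ((Rset s (fun j => ((b : ℝ) ^ k j)⁻¹) (fun j => ((b : ℝ) ^ k j)⁻¹) ∩ DsetS b s i).indicator
        fun _ => c)
      (Rset s (fun j => ((b : ℝ) ^ k j)⁻¹) (fun j => ((b : ℝ) ^ k j)⁻¹)) := by
  intro p hp
  simp [indicator_apply, hp, mem_DsetS_iff_of_mem_Rset hb i hp]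

lemma integrableOn_ite_forall_gammaB_eq (hb : 1 < b) (k i : Fin s → ℕ) (c : ℝ) :
    IntegrableOn (fun p : (Fin s → ℝ) × (Fin s → ℝ) =>
        if ∀ r, gammaB b (p.1 r) (p.2 r) = i r then c else 0)
      (Rset s (fun j => ((b : ℝ) ^ k j)⁻¹) (fun j => ((b : ℝ) ^ k j)⁻¹)) :=
  ((integrableOn_const (volume_Rset_ne_top _ _)).indicator
    (measurableSet_Rset_inter_DsetS hb k i)).congr_fun
    (eqOn_ite_forall_gammaB_eq (by omega) k i c).symm (measurableSet_Rset _ _)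

lemma setIntegral_ite_forall_gammaB_eq (hb : 1 < b) (k i : Fin s → ℕ) (c : ℝ) :
    ∫ p in Rset s (fun j => ((b : ℝ) ^ k j)⁻¹) (fun j => ((b : ℝ) ^ k j)⁻¹),
        (if ∀ r, gammaB b (p.1 r) (p.2 r) = i r then c else 0) =
      ViS b s i (fun j => ((b : ℝ) ^ k j)⁻¹) (fun j => ((b : ℝ) ^ k j)⁻¹) * c := by
  rw [setIntegral_congr_fun (measurableSet_Rset _ _) (eqOn_ite_forall_gammaB_eq (by omega) k i c),
    setIntegral_indicator (measurableSet_Rset_inter_DsetS hb k i), ← inter_assoc, inter_self,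
    setIntegral_const, smul_eq_mul, ViS, measureReal_def]

end Integral

section PointSet

noncomputable def gapVec {ι : Type*} (b : ℕ) (x y : ι → ℝ) : ι → ℕ :=
  fun r => (gammaB b (x r) (y r)).toNat

variable {b : ℕ}

lemma coe_gapVec {ι : Type*} {x y : ι → ℝ} {r : ι} (h : x r ≠ y r) :
    (gapVec b x y r : ℕ∞) = gammaB b (x r) (y r) :=
  ENat.natCast_toNat (mt gammaB_eq_top_iff.1 h)

lemma forall_gammaB_eq_iff {ι : Type*} {x y : ι → ℝ} {g : ι → ℕ} :
    (∀ r, gammaB b (x r) (y r) = g r) ↔ (∀ r, x r ≠ y r) ∧ gapVec b x y = g := by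
  constructor
  · intro h
    exact ⟨fun r hr => ENat.top_ne_natCast _ (gammaB_eq_top_iff.2 hr ▸ h r),
      funext fun r => by simp [gapVec, h r]⟩
  · rintro ⟨hne, rfl⟩ r
    exact (coe_gapVec (hne r)).symm

variable {n s : ℕ} {P : Fin n → Fin s → ℝ}

lemma nB_eq_card (hdist : ∀ j : Fin s, Function.Injective fun i => P i j) (i : Fin s → ℕ)
    (l : Fin n) :
    nB b P i l = (Finset.univ.filter fun j => j ≠ l ∧ gapVec b (P l) (P j) = i).card := by
  unfold nB
  congr 1
  refine Finset.filter_congr fun j _ => and_congr_right fun hjl => ?_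
  rw [forall_gammaB_eq_iff]
  exact and_iff_right fun r h => hjl (hdist r h).symm

lemma mB_eq_card (hdist : ∀ j : Fin s, Function.Injective fun i => P i j) (k : Fin s → ℕ)
    (l : Fin n) :
    mB b P k l = (Finset.univ.filter fun j => j ≠ l ∧ k ≤ gapVec b (P l) (P j)).card := by
  unfold mB
  congr 1
  refine Finset.filter_congr fun j _ => and_congr_right fun hjl => ?_
  rw [Pi.le_def]
  refine forall_congr' fun r => ?_
  rw [← coe_gapVec fun h => hjl (hdist r h).symm, Nat.cast_le]

end PointSet

lemma psi_eq_sum {b n s : ℕ} {P : Fin n → Fin s → ℝ}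
    (hdist : ∀ j : Fin s, Function.Injective fun i => P i j) (x y : Fin s → ℝ) :
    psi b P x y =
      (∑ l, ∑ j ∈ Finset.univ.filter (· ≠ l),
        if ∀ r, gammaB b (x r) (y r) = gapVec b (P l) (P j) r
        then (b : ℝ) ^ (s + ∑ r, gapVec b (P l) (P j) r) else 0) /
        (((b : ℝ) - 1) ^ s * ((n : ℝ) * ((n : ℝ) - 1))) := by
  rw [psi]
  split_ifs with hfin
  · have hne (r : Fin s) : x r ≠ y r := fun h => hfin r (gammaB_eq_top_iff.2 h)
    change (NB b P (gapVec b x y) : ℝ) * (b : ℝ) ^ (s + ∑ r, gapVec b x y r) / _ = _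
    congr 1
    simp only [forall_gammaB_eq_iff, and_iff_right hne]
    rw [NB, Nat.cast_sum, Finset.sum_mul]
    refine Finset.sum_congr rfl fun l _ => ?_
    rw [nB_eq_card hdist, ← Finset.sum_filter, Finset.filter_filter, Finset.card_eq_sum_ones,
      Nat.cast_sum, Finset.sum_mul]
    refine Finset.sum_congr (Finset.filter_congr fun j _ => and_congr_right fun _ => eq_comm)
      fun j hj => ?_
    rw [(Finset.mem_filter.1 hj).2.2, Nat.cast_one, one_mul]
  · push Not at hfin
    obtain ⟨r, hr⟩ := hfin
    rw [eq_comm, div_eq_zero_iff]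
    refine .inl <| Finset.sum_eq_zero fun l _ => Finset.sum_eq_zero fun j _ => if_neg fun h => ?_
    exact ENat.natCast_ne_top _ ((h r).symm.trans hr)

theorem stmt15_general (b n s : ℕ) (hb : 2 ≤ b)
    (P : Fin n → Fin s → ℝ)
    (hdist : ∀ j : Fin s, Function.Injective fun i => P i j)
    (k : Fin s → ℕ) :
    ∫ p in Rset s (fun j => ((b : ℝ) ^ k j)⁻¹) (fun j => ((b : ℝ) ^ k j)⁻¹),
        psi b P p.1 p.2 = CB b P k / (b : ℝ) ^ (2 * ∑ j, k j) := by
  have hb1 : 1 < b := by omega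
  have hint := integrableOn_ite_forall_gammaB_eq (s := s) hb1 k
  have hpow : ((b : ℝ) - 1) ^ s ≠ 0 :=
    pow_ne_zero _ (sub_ne_zero.2 (by exact_mod_cast (by omega : b ≠ 1)))
  calc _ = (∑ l, ∑ j ∈ Finset.univ.filter (· ≠ l),
          if k ≤ gapVec b (P l) (P j) then ((b : ℝ) - 1) ^ s / (b : ℝ) ^ (∑ r, k r) else 0) /
        (((b : ℝ) - 1) ^ s * ((n : ℝ) * ((n : ℝ) - 1))) := by
        simp_rw [psi_eq_sum hdist, integral_div,
          integral_finsetSum _ fun l _ => integrable_finsetSum _ fun j _ => hint _ _,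
          integral_finsetSum _ fun j _ => hint _ _, setIntegral_ite_forall_gammaB_eq hb1,
          mul_comm (ViS _ _ _ _ _), pow_mul_ViS hb1]
    _ = MB b P k * (((b : ℝ) - 1) ^ s / (b : ℝ) ^ (∑ r, k r)) /
        (((b : ℝ) - 1) ^ s * ((n : ℝ) * ((n : ℝ) - 1))) := by
        simp_rw [← Finset.sum_filter, Finset.filter_filter, Finset.sum_const, nsmul_eq_mul,
          ← mB_eq_card hdist, ← Finset.sum_mul, ← Nat.cast_sum, MB]
    _ = CB b P k / (b : ℝ) ^ (2 * ∑ j, k j) := by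
        rw [CB, two_mul, pow_add]
        field_simp

theorem stmt15 (b n s : ℕ) (hb : 2 ≤ b) (hs : 1 ≤ s) (hn : 2 ≤ n)
    (P : Fin n → Fin s → ℝ) (hP : ∀ i j, P i j ∈ Set.Ico (0 : ℝ) 1)
    (hdist : ∀ j : Fin s, Function.Injective fun i => P i j)
    (k : Fin s → ℕ) :
    ∫ p in Rset s (fun j => ((b : ℝ) ^ k j)⁻¹) (fun j => ((b : ℝ) ^ k j)⁻¹),
        psi b P p.1 p.2 = CB b P k / (b : ℝ) ^ (2 * ∑ j, k j) :=
  stmt15_general b n s hb P hdist k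
end

section
/- Let b ≥ 2, s ≥ 1, n ≥ 2, and let P_n = (V_1,…,V_n) be points in [0,1)^s such that for each j the j-th coordinates V_{1,j},…,V_{n,j} are pairwise distinct, with associated function ψ. Then for all x, y ∈ [0,1]^s, the Lebesgue integral of ψ over (∏_{j=1}^s [1−x_j, 1)) × (∏_{j=1}^s [1−y_j, 1)) equals the Lebesgue integral of ψ over R(x,y) = (∏_{j=1}^s [0, x_j)) × (∏_{j=1}^s [0, y_j)). -/
open MeasureTheory
open scoped Classical

/-! ### Auxiliary lemmas -/

lemma floor_int_sub_of_fract_ne (m : ℤ) (t : ℝ) (h : Int.fract t ≠ 0) :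
    ⌊(m : ℝ) - t⌋ = m - ⌊t⌋ - 1 := by
  have hc : ⌈t⌉ = ⌊t⌋ + 1 := by
    have h1 : (⌈t⌉ : ℝ) = t + 1 - Int.fract t := Int.ceil_eq_add_one_sub_fract h
    have h2 : (⌈t⌉ : ℝ) = (⌊t⌋ : ℝ) + 1 := by
      rw [h1, Int.fract]; ring
    exact_mod_cast h2
  rw [sub_eq_add_neg, Int.floor_intCast_add, Int.floor_neg, hc]; ring

lemma gammaB_reflect (b : ℕ) {x y : ℝ}
    (hx : ∀ i : ℕ, Int.fract ((b : ℝ) ^ i * x) ≠ 0)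
    (hy : ∀ i : ℕ, Int.fract ((b : ℝ) ^ i * y) ≠ 0) :
    gammaB b (1 - x) (1 - y) = gammaB b x y := by
  unfold gammaB
  by_cases hxy : x = y
  · simp [hxy]
  · rw [if_neg hxy, if_neg (fun h => hxy (by linarith))]
    have key : ∀ i : ℕ,
        (⌊(b : ℝ) ^ i * (1 - x)⌋ = ⌊(b : ℝ) ^ i * (1 - y)⌋) ↔
          (⌊(b : ℝ) ^ i * x⌋ = ⌊(b : ℝ) ^ i * y⌋) := by
      intro i
      have hbx : (b : ℝ) ^ i * (1 - x) = (((b : ℤ) ^ i : ℤ) : ℝ) - (b : ℝ) ^ i * x := by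
        push_cast; ring
      have hby : (b : ℝ) ^ i * (1 - y) = (((b : ℤ) ^ i : ℤ) : ℝ) - (b : ℝ) ^ i * y := by
        push_cast; ring
      rw [hbx, hby, floor_int_sub_of_fract_ne _ _ (hx i), floor_int_sub_of_fract_ne _ _ (hy i)]
      omega
    congr 2
    ext i
    simp only [Set.mem_setOf_eq, ne_eq, key]

lemma psi_congr {n s : ℕ} (b : ℕ) (P : Fin n → Fin s → ℝ) {u v u' v' : Fin s → ℝ}
    (h : ∀ j, gammaB b (u' j) (v' j) = gammaB b (u j) (v j)) :
    psi b P u' v' = psi b P u v := by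
  unfold psi
  simp only [h]

lemma hyperplane_null (s : ℕ) (j : Fin s) (c : ℝ) :
    volume {f : Fin s → ℝ | f j = c} = 0 := by
  rw [volume_pi]
  exact Measure.pi_hyperplane (μ := fun _ : Fin s => (volume : Measure ℝ)) j c

lemma coord_mem_null (s : ℕ) (j : Fin s) {C : Set ℝ} (hC : C.Countable) :
    volume {f : Fin s → ℝ | f j ∈ C} = 0 := by
  have : {f : Fin s → ℝ | f j ∈ C} = ⋃ c ∈ C, {f : Fin s → ℝ | f j = c} := by
    ext f; simp
  rw [this]
  exact (measure_biUnion_null_iff hC).2 fun c _ => hyperplane_null s j c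

lemma pair_fst_null (s : ℕ) {A : Set (Fin s → ℝ)} (hA : volume A = 0) :
    volume {p : (Fin s → ℝ) × (Fin s → ℝ) | p.1 ∈ A} = 0 := by
  have : {p : (Fin s → ℝ) × (Fin s → ℝ) | p.1 ∈ A} = A ×ˢ Set.univ := by
    ext p; simp
  rw [this, Measure.volume_eq_prod, Measure.prod_prod, hA, zero_mul]

lemma pair_snd_null (s : ℕ) {A : Set (Fin s → ℝ)} (hA : volume A = 0) :
    volume {p : (Fin s → ℝ) × (Fin s → ℝ) | p.2 ∈ A} = 0 := by
  have : {p : (Fin s → ℝ) × (Fin s → ℝ) | p.2 ∈ A} = Set.univ ×ˢ A := by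
    ext p; simp
  rw [this, Measure.volume_eq_prod, Measure.prod_prod, hA, mul_zero]

lemma fractSet_countable (b : ℕ) (hb : 2 ≤ b) :
    Set.Countable {t : ℝ | ∃ i : ℕ, Int.fract ((b : ℝ) ^ i * t) = 0} := by
  have hsub : {t : ℝ | ∃ i : ℕ, Int.fract ((b : ℝ) ^ i * t) = 0} ⊆
      ⋃ i : ℕ, (fun t : ℝ => (b : ℝ) ^ i * t) ⁻¹' (Set.range (Int.cast : ℤ → ℝ)) := by
    intro t ht
    obtain ⟨i, hi⟩ := ht
    refine Set.mem_iUnion.2 ⟨i, ?_⟩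
    have : (b : ℝ) ^ i * t = (⌊(b : ℝ) ^ i * t⌋ : ℝ) := by
      have := Int.fract ((b : ℝ) ^ i * t)
      have h2 : (b : ℝ) ^ i * t - (⌊(b : ℝ) ^ i * t⌋ : ℝ) = 0 := hi
      linarith
    exact ⟨⌊(b : ℝ) ^ i * t⌋, this.symm⟩
  refine Set.Countable.mono hsub (Set.countable_iUnion fun i => ?_)
  refine Set.Countable.preimage (Set.countable_range _) ?_
  have hb0 : ((b : ℝ) ^ i) ≠ 0 := by positivity
  exact fun a c h => by
    have := mul_left_cancel₀ hb0 h; exact this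

theorem stmt18 (b n s : ℕ) (hb : 2 ≤ b) (hs : 1 ≤ s) (hn : 2 ≤ n)
    (P : Fin n → Fin s → ℝ) (hP : ∀ i j, P i j ∈ Set.Ico (0 : ℝ) 1)
    (hdist : ∀ j : Fin s, Function.Injective fun i => P i j)
    (x y : Fin s → ℝ)
    (hx : ∀ j, x j ∈ Set.Icc (0 : ℝ) 1) (hy : ∀ j, y j ∈ Set.Icc (0 : ℝ) 1) :
    ∫ p in ((Set.univ.pi fun j => Set.Ico (1 - x j) 1) ×ˢ
        (Set.univ.pi fun j => Set.Ico (1 - y j) 1) :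
        Set ((Fin s → ℝ) × (Fin s → ℝ))), psi b P p.1 p.2 =
      ∫ p in Rset s x y, psi b P p.1 p.2 := by
  classical
  set T : ((Fin s → ℝ) × (Fin s → ℝ)) → ((Fin s → ℝ) × (Fin s → ℝ)) :=
    fun p => (fun j => 1 - p.1 j, fun j => 1 - p.2 j) with hT
  have hrefl : MeasurePreserving (fun f : Fin s → ℝ => fun j => 1 - f j) volume volume :=
    volume_preserving_pi (fun _ => Measure.measurePreserving_sub_left volume 1)
  have hTmp : MeasurePreserving T volume volume := by
    rw [Measure.volume_eq_prod (α := Fin s → ℝ) (β := Fin s → ℝ)]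
    exact hrefl.prod hrefl
  have hTinv : Function.Involutive T := by
    intro p; simp [hT]
  have hTemb : MeasurableEmbedding T :=
    MeasurableEquiv.measurableEmbedding
      { toEquiv := hTinv.toPerm T
        measurable_toFun := hTmp.measurable
        measurable_invFun := hTmp.measurable }
  set L : Set ((Fin s → ℝ) × (Fin s → ℝ)) := ((Set.univ.pi fun j => Set.Ico (1 - x j) 1) ×ˢ
      (Set.univ.pi fun j => Set.Ico (1 - y j) 1)) with hL
  set B : Set ((Fin s → ℝ) × (Fin s → ℝ)) := (Set.univ.pi fun j => Set.Ioc 0 (x j)) ×ˢ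
      (Set.univ.pi fun j => Set.Ioc 0 (y j)) with hB
  have hpre : T ⁻¹' L = B := by
    ext p
    simp only [hL, hB, hT, Set.mem_preimage, Set.mem_prod, Set.mem_pi, Set.mem_univ,
      forall_true_left, Set.mem_Ico, Set.mem_Ioc, true_implies]
    constructor
    · rintro ⟨h1, h2⟩
      exact ⟨fun j => ⟨by linarith [(h1 j).2], by linarith [(h1 j).1]⟩,
        fun j => ⟨by linarith [(h2 j).2], by linarith [(h2 j).1]⟩⟩
    · rintro ⟨h1, h2⟩
      exact ⟨fun j => ⟨by linarith [(h1 j).2], by linarith [(h1 j).1]⟩,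
        fun j => ⟨by linarith [(h2 j).2], by linarith [(h2 j).1]⟩⟩
  -- step 1: change of variables
  have step1 : ∫ p in L, psi b P p.1 p.2 = ∫ p in B, psi b P (T p).1 (T p).2 := by
    rw [← hpre]
    exact (hTmp.setIntegral_preimage_emb hTemb (fun p => psi b P p.1 p.2) L).symm
  -- step 2: a.e. on B, psi (T p) = psi p
  set C : Set ℝ := {t : ℝ | ∃ i : ℕ, Int.fract ((b : ℝ) ^ i * t) = 0} with hC
  have hCc : C.Countable := fractSet_countable b hb
  set S : Set ((Fin s → ℝ) × (Fin s → ℝ)) :=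
    {p : (Fin s → ℝ) × (Fin s → ℝ) | (∃ j, p.1 j ∈ C) ∨ (∃ j, p.2 j ∈ C)} with hS
  have hSnull : volume S = 0 := by
    have h1 : volume {p : (Fin s → ℝ) × (Fin s → ℝ) | ∃ j, p.1 j ∈ C} = 0 := by
      have he : {p : (Fin s → ℝ) × (Fin s → ℝ) | ∃ j, p.1 j ∈ C} =
          {p : (Fin s → ℝ) × (Fin s → ℝ) | p.1 ∈ ⋃ j, {f : Fin s → ℝ | f j ∈ C}} := by
        ext p; simp
      rw [he]
      exact pair_fst_null s (measure_iUnion_null fun j => coord_mem_null s j hCc)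
    have h2 : volume {p : (Fin s → ℝ) × (Fin s → ℝ) | ∃ j, p.2 j ∈ C} = 0 := by
      have he : {p : (Fin s → ℝ) × (Fin s → ℝ) | ∃ j, p.2 j ∈ C} =
          {p : (Fin s → ℝ) × (Fin s → ℝ) | p.2 ∈ ⋃ j, {f : Fin s → ℝ | f j ∈ C}} := by
        ext p; simp
      rw [he]
      exact pair_snd_null s (measure_iUnion_null fun j => coord_mem_null s j hCc)
    exact measure_mono_null (fun p hp => hp) (measure_union_null h1 h2)
  have hBmeas : MeasurableSet B :=
    (MeasurableSet.univ_pi fun j => measurableSet_Ioc).prod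
      (MeasurableSet.univ_pi fun j => measurableSet_Ioc)
  have step2 : ∫ p in B, psi b P (T p).1 (T p).2 = ∫ p in B, psi b P p.1 p.2 := by
    refine setIntegral_congr_ae hBmeas ?_
    have hae : ∀ᵐ p : (Fin s → ℝ) × (Fin s → ℝ), p ∉ S := by
      rw [ae_iff]
      refine measure_mono_null (fun p hp => ?_) hSnull
      simpa using hp
    filter_upwards [hae] with p hp _
    have h1 : ∀ j, ∀ i : ℕ, Int.fract ((b : ℝ) ^ i * p.1 j) ≠ 0 :=
      fun j i hcon => hp (Or.inl ⟨j, ⟨i, hcon⟩⟩)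
    have h2 : ∀ j, ∀ i : ℕ, Int.fract ((b : ℝ) ^ i * p.2 j) ≠ 0 :=
      fun j i hcon => hp (Or.inr ⟨j, ⟨i, hcon⟩⟩)
    exact psi_congr b P (fun j => gammaB_reflect b (h1 j) (h2 j))
  -- step 3: B = Rset up to null sets
  have step3 : ∫ p in B, psi b P p.1 p.2 = ∫ p in Rset s x y, psi b P p.1 p.2 := by
    refine setIntegral_congr_set ?_
    rw [MeasureTheory.ae_eq_set]
    set Z : Set ((Fin s → ℝ) × (Fin s → ℝ)) :=
      ⋃ j, ({p : (Fin s → ℝ) × (Fin s → ℝ) | p.1 j = x j} ∪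
        {p : (Fin s → ℝ) × (Fin s → ℝ) | p.1 j = 0} ∪
        {p : (Fin s → ℝ) × (Fin s → ℝ) | p.2 j = y j} ∪
        {p : (Fin s → ℝ) × (Fin s → ℝ) | p.2 j = 0}) with hZ
    have hZnull : volume Z = 0 := by
      refine measure_iUnion_null fun j => ?_
      have e1 : volume {p : (Fin s → ℝ) × (Fin s → ℝ) | p.1 j = x j} = 0 :=
        pair_fst_null s (hyperplane_null s j (x j))
      have e2 : volume {p : (Fin s → ℝ) × (Fin s → ℝ) | p.1 j = 0} = 0 :=
        pair_fst_null s (hyperplane_null s j 0)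
      have e3 : volume {p : (Fin s → ℝ) × (Fin s → ℝ) | p.2 j = y j} = 0 :=
        pair_snd_null s (hyperplane_null s j (y j))
      have e4 : volume {p : (Fin s → ℝ) × (Fin s → ℝ) | p.2 j = 0} = 0 :=
        pair_snd_null s (hyperplane_null s j 0)
      exact measure_union_null (measure_union_null (measure_union_null e1 e2) e3) e4
    constructor
    · refine measure_mono_null ?_ hZnull
      rintro p ⟨hpB, hpR⟩
      rw [hB, Set.mem_prod] at hpB
      obtain ⟨hB1, hB2⟩ := hpB
      rw [Rset, Set.mem_prod] at hpR
      push_neg at hpR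
      by_cases hc : p.1 ∈ Set.univ.pi fun j => Set.Ico 0 (x j)
      · have hc2 := hpR hc
        rw [Set.mem_pi] at hc2
        push_neg at hc2
        obtain ⟨j, _, hj⟩ := hc2
        have hio := hB2 j (Set.mem_univ j)
        rw [Set.mem_Ioc] at hio
        rw [Set.mem_Ico] at hj
        push_neg at hj
        have heq : p.2 j = y j := le_antisymm hio.2 (hj (le_of_lt hio.1))
        refine Set.mem_iUnion.2 ⟨j, ?_⟩
        simp only [Set.mem_union, Set.mem_setOf_eq]
        tauto
      · rw [Set.mem_pi] at hc
        push_neg at hc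
        obtain ⟨j, _, hj⟩ := hc
        have hio := hB1 j (Set.mem_univ j)
        rw [Set.mem_Ioc] at hio
        rw [Set.mem_Ico] at hj
        push_neg at hj
        have heq : p.1 j = x j := le_antisymm hio.2 (hj (le_of_lt hio.1))
        refine Set.mem_iUnion.2 ⟨j, ?_⟩
        simp only [Set.mem_union, Set.mem_setOf_eq]
        tauto
    · refine measure_mono_null ?_ hZnull
      rintro p ⟨hpR, hpB⟩
      rw [Rset, Set.mem_prod] at hpR
      obtain ⟨hR1, hR2⟩ := hpR
      rw [hB, Set.mem_prod] at hpB
      push_neg at hpB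
      by_cases hc : p.1 ∈ Set.univ.pi fun j => Set.Ioc 0 (x j)
      · have hc2 := hpB hc
        rw [Set.mem_pi] at hc2
        push_neg at hc2
        obtain ⟨j, _, hj⟩ := hc2
        have h0 := hR2 j (Set.mem_univ j)
        rw [Set.mem_Ico] at h0
        rw [Set.mem_Ioc] at hj
        push_neg at hj
        have heq : p.2 j = 0 := by
          rcases lt_or_ge 0 (p.2 j) with h | h
          · exact absurd (hj h) (not_lt.mpr (le_of_lt h0.2))
          · exact le_antisymm h h0.1
        refine Set.mem_iUnion.2 ⟨j, ?_⟩
        simp only [Set.mem_union, Set.mem_setOf_eq]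
        tauto
      · rw [Set.mem_pi] at hc
        push_neg at hc
        obtain ⟨j, _, hj⟩ := hc
        have h0 := hR1 j (Set.mem_univ j)
        rw [Set.mem_Ico] at h0
        rw [Set.mem_Ioc] at hj
        push_neg at hj
        have heq : p.1 j = 0 := by
          rcases lt_or_ge 0 (p.1 j) with h | h
          · exact absurd (hj h) (not_lt.mpr (le_of_lt h0.2))
          · exact le_antisymm h h0.1
        refine Set.mem_iUnion.2 ⟨j, ?_⟩
        simp only [Set.mem_union, Set.mem_setOf_eq]
        tauto

  rw [step1, step2, step3]
end
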